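/- Let 0 < b_c < a_c and let P = (x, y, z) have elliptic coordinates k₀, k₁, k₂ with −a_c² < k₂ < −b_c² < k₁ < 0 < k₀. Let u := v/‖v‖ with v := a_e b_e c_e · n₀ + a_{h2} b_{h2} c_{h2} · n₂ be the unit direction vector of a generator of the one-sheeted hyperboloid ℋ₁ through P, and n₀ = (x/(a_c² + k₀), y/(b_c² + k₀), z/k₀) the normal of the ellipsoid ℰ at P. Then |⟨u, n₀⟩| = (k₀ − k₁)/(a_e b_e c_e). Hence the Joachimsthal integral of the focal billiards along the curve e = ℰ ∩ ℋ₁ equals J_e = (k₀ − k₁)/(a_e b_e c_e). -/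

import Mathlib

open scoped RealInnerProductSpace

/-!
Write `A = a_c²`, `B = b_c²`. Clearing denominators in `x²/(A+t) + y²/(B+t) + z²/t = 1` gives a
monic cubic in `t` whose roots are the elliptic coordinates `k₀, k₁, k₂`; evaluating its
factorisation at `t = -A, -B, 0` expresses `x², y², z²` through them, and then
`‖n₀‖² = (k₀-k₁)(k₀-k₂)/(a_e b_e c_e)²` and `‖n₂‖² = (k₀-k₂)(k₁-k₂)/(a_{h2} b_{h2} c_{h2})²`.
Confocal quadrics meet orthogonally, so `⟨n₀, n₂⟩ = 0`: by Pythagoras `‖v‖ = k₀ - k₂`, while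
`⟨v, n₀⟩ = a_e b_e c_e ‖n₀‖² = (k₀-k₁)(k₀-k₂)/(a_e b_e c_e)`.
-/

theorem inner_normalize_smul_add_smul {E : Type*} [NormedAddCommGroup E] [InnerProductSpace ℝ E]
    {n m : E} (h : ⟪n, m⟫ = 0) (α β : ℝ) :
    ⟪‖α • n + β • m‖⁻¹ • (α • n + β • m), n⟫
      = α * ‖n‖ ^ 2 / √(α ^ 2 * ‖n‖ ^ 2 + β ^ 2 * ‖m‖ ^ 2) := by
  have hnorm : ‖α • n + β • m‖ ^ 2 = α ^ 2 * ‖n‖ ^ 2 + β ^ 2 * ‖m‖ ^ 2 := by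
    rw [sq, norm_add_sq_eq_norm_sq_add_norm_sq_real
      (by rw [real_inner_smul_left, real_inner_smul_right, h, mul_zero, mul_zero])]
    simp only [norm_smul, Real.norm_eq_abs]
    rw [← sq_abs α, ← sq_abs β]
    ring
  rw [← hnorm, Real.sqrt_sq (norm_nonneg _), real_inner_smul_left, inner_add_left,
    real_inner_smul_left, real_inner_smul_left, real_inner_comm n m, h,
    real_inner_self_eq_norm_sq]
  ring

namespace Confocal

variable {A B x y z : ℝ}

noncomputable def quadric (A B x y z k : ℝ) : ℝ := x ^ 2 / (A + k) + y ^ 2 / (B + k) + z ^ 2 / k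

noncomputable def normal (A B x y z k : ℝ) : EuclideanSpace ℝ (Fin 3) :=
  !₂[x / (A + k), y / (B + k), z / k]

/-- `quadric A B x y z t = 1` with the denominators cleared; a monic cubic in `t`. -/
def cubic (A B x y z t : ℝ) : ℝ :=
  (A + t) * (B + t) * t - x ^ 2 * (B + t) * t - y ^ 2 * (A + t) * t - z ^ 2 * (A + t) * (B + t)

theorem inner_normal (k k' : ℝ) :
    ⟪normal A B x y z k, normal A B x y z k'⟫
      = x ^ 2 / ((A + k) * (A + k')) + y ^ 2 / ((B + k) * (B + k')) + z ^ 2 / (k * k') := by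
  simp only [normal, PiLp.inner_apply, Fin.sum_univ_three, RCLike.inner_apply, conj_trivial,
    Matrix.cons_val_zero, Matrix.cons_val_one, Matrix.cons_val_two, Matrix.head_cons,
    Matrix.tail_cons, div_mul_div_comm, sq]
  ring

theorem inner_normal_eq_zero {k k' : ℝ} (hkk' : k ≠ k') (hAk : A + k ≠ 0) (hBk : B + k ≠ 0)
    (hk : k ≠ 0) (hAk' : A + k' ≠ 0) (hBk' : B + k' ≠ 0) (hk' : k' ≠ 0)
    (h : quadric A B x y z k = 1) (h' : quadric A B x y z k' = 1) :
    ⟪normal A B x y z k, normal A B x y z k'⟫ = 0 := by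
  have hdiff : (k' - k) * ⟪normal A B x y z k, normal A B x y z k'⟫
      = quadric A B x y z k - quadric A B x y z k' := by
    rw [inner_normal, quadric, quadric]
    field_simp
    ring
  rw [h, h', sub_self] at hdiff
  exact (mul_eq_zero.mp hdiff).resolve_left (sub_ne_zero.mpr hkk'.symm)

theorem cubic_eq_zero {k : ℝ} (hAk : A + k ≠ 0) (hBk : B + k ≠ 0) (hk : k ≠ 0)
    (h : quadric A B x y z k = 1) : cubic A B x y z k = 0 := by
  rw [quadric] at h
  field_simp at h
  rw [cubic]
  linear_combination -h

/-- Lagrange interpolation: the quadratic `cubic t - (t - k₀)(t - k₁)(t - k₂)` vanishes at three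
distinct points. -/
theorem cubic_eq_prod {k₀ k₁ k₂ : ℝ} (h₀ : cubic A B x y z k₀ = 0) (h₁ : cubic A B x y z k₁ = 0)
    (h₂ : cubic A B x y z k₂ = 0) (h₀₁ : k₀ ≠ k₁) (h₀₂ : k₀ ≠ k₂) (h₁₂ : k₁ ≠ k₂) (t : ℝ) :
    cubic A B x y z t = (t - k₀) * (t - k₁) * (t - k₂) := by
  have hD : (k₀ - k₁) * (k₀ - k₂) * (k₁ - k₂) ≠ 0 := by
    simp only [ne_eq, mul_eq_zero, sub_eq_zero, not_or]
    exact ⟨⟨h₀₁, h₀₂⟩, h₁₂⟩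
  apply mul_right_cancel₀ hD
  unfold cubic at *
  linear_combination ((t - k₁) * (t - k₂) * (k₁ - k₂)) * h₀
    - ((t - k₀) * (t - k₂) * (k₀ - k₂)) * h₁ + ((t - k₀) * (t - k₁) * (k₀ - k₁)) * h₂

theorem sq_mul_eq_of_cubic_eq_prod {k₀ k₁ k₂ : ℝ}
    (hc : ∀ t, cubic A B x y z t = (t - k₀) * (t - k₁) * (t - k₂)) :
    x ^ 2 * (A * (A - B)) = (A + k₀) * (A + k₁) * (A + k₂) ∧
    y ^ 2 * (B * (B - A)) = (B + k₀) * (B + k₁) * (B + k₂) ∧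
    z ^ 2 * (A * B) = k₀ * k₁ * k₂ := by
  have hA := hc (-A)
  have hB := hc (-B)
  have h0 := hc 0
  unfold cubic at hA hB h0
  exact ⟨by linear_combination -hA, by linear_combination -hB, by linear_combination -h0⟩

theorem inner_normal_self {k₀ k₁ k₂ : ℝ}
    (hc : ∀ t, cubic A B x y z t = (t - k₀) * (t - k₁) * (t - k₂))
    (hA : A ≠ 0) (hB : B ≠ 0) (hAB : A ≠ B) (hAk : A + k₀ ≠ 0) (hBk : B + k₀ ≠ 0) (hk : k₀ ≠ 0) :
    ⟪normal A B x y z k₀, normal A B x y z k₀⟫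
      = (k₀ - k₁) * (k₀ - k₂) / ((A + k₀) * (B + k₀) * k₀) := by
  obtain ⟨hx, hy, hz⟩ := sq_mul_eq_of_cubic_eq_prod hc
  have hAB' : A - B ≠ 0 := sub_ne_zero.mpr hAB
  have hBA' : B - A ≠ 0 := sub_ne_zero.mpr hAB.symm
  rw [inner_normal, eq_div_of_mul_eq (by positivity) hx, eq_div_of_mul_eq (by positivity) hy,
    eq_div_of_mul_eq (by positivity) hz]
  field_simp
  ring

structure IsEllipticCoords (A B x y z k₀ k₁ k₂ : ℝ) : Prop where
  neg_lt_k₂ : -A < k₂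
  k₂_lt_neg : k₂ < -B
  neg_lt_k₁ : -B < k₁
  k₁_neg : k₁ < 0
  k₀_pos : 0 < k₀
  quadric_k₀ : quadric A B x y z k₀ = 1
  quadric_k₁ : quadric A B x y z k₁ = 1
  quadric_k₂ : quadric A B x y z k₂ = 1

namespace IsEllipticCoords

variable {k₀ k₁ k₂ : ℝ}

theorem bounds (h : IsEllipticCoords A B x y z k₀ k₁ k₂) :
    0 < B ∧ B < A ∧ 0 < A + k₀ ∧ 0 < B + k₀ ∧ 0 < A + k₁ ∧ 0 < B + k₁ ∧
      0 < A + k₂ ∧ B + k₂ < 0 ∧ k₂ < 0 ∧ k₂ < k₁ ∧ k₁ < k₀ := by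
  have := h.neg_lt_k₂; have := h.k₂_lt_neg; have := h.neg_lt_k₁; have := h.k₁_neg
  have := h.k₀_pos
  refine ⟨?_, ?_, ?_, ?_, ?_, ?_, ?_, ?_, ?_, ?_, ?_⟩ <;> linarith

theorem cubic_eq_prod (h : IsEllipticCoords A B x y z k₀ k₁ k₂) (t : ℝ) :
    cubic A B x y z t = (t - k₀) * (t - k₁) * (t - k₂) := by
  obtain ⟨-, -, hA₀, hB₀, hA₁, hB₁, hA₂, hB₂, hk₂, hk₂₁, hk₁₀⟩ := h.bounds
  exact Confocal.cubic_eq_prod (cubic_eq_zero hA₀.ne' hB₀.ne' h.k₀_pos.ne' h.quadric_k₀)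
    (cubic_eq_zero hA₁.ne' hB₁.ne' h.k₁_neg.ne h.quadric_k₁)
    (cubic_eq_zero hA₂.ne' hB₂.ne hk₂.ne h.quadric_k₂)
    hk₁₀.ne' (hk₂₁.trans hk₁₀).ne' hk₂₁.ne' t

theorem inner_normal_k₀_k₂ (h : IsEllipticCoords A B x y z k₀ k₁ k₂) :
    ⟪normal A B x y z k₀, normal A B x y z k₂⟫ = 0 := by
  obtain ⟨-, -, hA₀, hB₀, -, -, hA₂, hB₂, hk₂, hk₂₁, hk₁₀⟩ := h.bounds
  exact inner_normal_eq_zero (hk₂₁.trans hk₁₀).ne' hA₀.ne' hB₀.ne' h.k₀_pos.ne' hA₂.ne' hB₂.ne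
    hk₂.ne h.quadric_k₀ h.quadric_k₂

theorem inner_normal_k₀_self (h : IsEllipticCoords A B x y z k₀ k₁ k₂) :
    ⟪normal A B x y z k₀, normal A B x y z k₀⟫
      = (k₀ - k₁) * (k₀ - k₂) / ((A + k₀) * (B + k₀) * k₀) := by
  obtain ⟨hB, hBA, hA₀, hB₀, -⟩ := h.bounds
  exact inner_normal_self h.cubic_eq_prod (hB.trans hBA).ne' hB.ne' hBA.ne' hA₀.ne' hB₀.ne'
    h.k₀_pos.ne'

theorem inner_normal_k₂_self (h : IsEllipticCoords A B x y z k₀ k₁ k₂) :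
    ⟪normal A B x y z k₂, normal A B x y z k₂⟫
      = (k₂ - k₀) * (k₂ - k₁) / ((A + k₂) * (B + k₂) * k₂) := by
  obtain ⟨hB, hBA, -, -, -, -, hA₂, hB₂, hk₂, -⟩ := h.bounds
  exact inner_normal_self (fun t => by rw [h.cubic_eq_prod]; ring) (hB.trans hBA).ne' hB.ne'
    hBA.ne' hA₂.ne' hB₂.ne hk₂.ne

theorem inner_normalize_generator (h : IsEllipticCoords A B x y z k₀ k₁ k₂) {α β : ℝ}
    (hα : α ^ 2 = (A + k₀) * (B + k₀) * k₀) (hβ : β ^ 2 = (A + k₂) * (B + k₂) * k₂) :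
    ⟪‖α • normal A B x y z k₀ + β • normal A B x y z k₂‖⁻¹ •
        (α • normal A B x y z k₀ + β • normal A B x y z k₂), normal A B x y z k₀⟫
      = (k₀ - k₁) / α := by
  obtain ⟨-, -, hA₀, hB₀, -, -, hA₂, hB₂, hk₂, hk₂₁, hk₁₀⟩ := h.bounds
  have hα0 : α ^ 2 ≠ 0 := hα ▸ (mul_pos (mul_pos hA₀ hB₀) h.k₀_pos).ne'
  have hβ0 : β ^ 2 ≠ 0 := hβ ▸ mul_ne_zero (mul_ne_zero hA₂.ne' hB₂.ne) hk₂.ne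
  have : α ≠ 0 := ne_zero_pow two_ne_zero hα0
  have hk₀₂ : 0 < k₀ - k₂ := by linarith
  have hn₀ := h.inner_normal_k₀_self
  have hn₂ := h.inner_normal_k₂_self
  rw [← hα] at hn₀
  rw [← hβ] at hn₂
  have hnorm : α ^ 2 * ‖normal A B x y z k₀‖ ^ 2 + β ^ 2 * ‖normal A B x y z k₂‖ ^ 2
      = (k₀ - k₂) ^ 2 := by
    rw [← real_inner_self_eq_norm_sq, ← real_inner_self_eq_norm_sq, hn₀, hn₂,
      mul_div_cancel₀ _ hα0, mul_div_cancel₀ _ hβ0]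
    ring
  rw [inner_normalize_smul_add_smul h.inner_normal_k₀_k₂, hnorm, Real.sqrt_sq hk₀₂.le,
    ← real_inner_self_eq_norm_sq, hn₀]
  field_simp

end IsEllipticCoords

end Confocal

theorem stmt13_general (ac bc x y z k0 k1 k2 : ℝ)
    (hk2 : -ac ^ 2 < k2) (hk2' : k2 < -bc ^ 2) (hk1 : -bc ^ 2 < k1)
    (hk1' : k1 < 0) (hk0 : 0 < k0)
    (h0 : x ^ 2 / (ac ^ 2 + k0) + y ^ 2 / (bc ^ 2 + k0) + z ^ 2 / k0 = 1)
    (h1 : x ^ 2 / (ac ^ 2 + k1) + y ^ 2 / (bc ^ 2 + k1) + z ^ 2 / k1 = 1)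
    (h2 : x ^ 2 / (ac ^ 2 + k2) + y ^ 2 / (bc ^ 2 + k2) + z ^ 2 / k2 = 1)
    (ae be ce ah2 bh2 ch2 : ℝ)
    (hae : ae = Real.sqrt (ac ^ 2 + k0)) (hbe : be = Real.sqrt (bc ^ 2 + k0))
    (hce : ce = Real.sqrt k0)
    (hah2 : ah2 = Real.sqrt (ac ^ 2 + k2))
    (hbh2 : bh2 = Real.sqrt (-(bc ^ 2 + k2)))
    (hch2 : ch2 = Real.sqrt (-k2))
    (n0 n2 v u : EuclideanSpace ℝ (Fin 3))
    (hn0 : n0 = ![x / (ac ^ 2 + k0), y / (bc ^ 2 + k0), z / k0])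
    (hn2 : n2 = ![x / (ac ^ 2 + k2), y / (bc ^ 2 + k2), z / k2])
    (hv : v = (ae * be * ce) • n0 + (ah2 * bh2 * ch2) • n2)
    (hu : u = ‖v‖⁻¹ • v) :
    |⟪u, n0⟫| = (k0 - k1) / (ae * be * ce) := by
  have h : Confocal.IsEllipticCoords (ac ^ 2) (bc ^ 2) x y z k0 k1 k2 :=
    ⟨hk2, hk2', hk1, hk1', hk0, h0, h1, h2⟩
  obtain ⟨-, -, hA₀, hB₀, -, -, hA₂, hB₂, hk₂, -, hk₁₀⟩ := h.bounds
  obtain rfl : n0 = Confocal.normal (ac ^ 2) (bc ^ 2) x y z k0 := WithLp.ofLp_injective 2 hn0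
  obtain rfl : n2 = Confocal.normal (ac ^ 2) (bc ^ 2) x y z k2 := WithLp.ofLp_injective 2 hn2
  have hα : (ae * be * ce) ^ 2 = (ac ^ 2 + k0) * (bc ^ 2 + k0) * k0 := by
    rw [hae, hbe, hce, mul_pow, mul_pow, Real.sq_sqrt hA₀.le, Real.sq_sqrt hB₀.le,
      Real.sq_sqrt hk0.le]
  have hβ : (ah2 * bh2 * ch2) ^ 2 = (ac ^ 2 + k2) * (bc ^ 2 + k2) * k2 := by
    rw [hah2, hbh2, hch2, mul_pow, mul_pow, Real.sq_sqrt hA₂.le, Real.sq_sqrt (by linarith),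
      Real.sq_sqrt (by linarith)]
    ring
  have hα_pos : 0 < ae * be * ce := by
    rw [hae, hbe, hce]
    positivity
  rw [hu, hv, h.inner_normalize_generator hα hβ]
  exact abs_of_pos (div_pos (sub_pos.mpr hk₁₀) hα_pos)

/-- The Joachimsthal integral of the focal billiards along `e = ℰ ∩ ℋ₁`:
for the unit direction `u = v/‖v‖` of a generator of `ℋ₁` through `P` and the
normal `n₀` of the ellipsoid at `P`, `|⟨u, n₀⟩| = (k₀ − k₁)/(a_e b_e c_e)`. -/
theorem stmt13 (ac bc x y z k0 k1 k2 : ℝ) (hbc : 0 < bc) (hba : bc < ac)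
    (hk2 : -ac ^ 2 < k2) (hk2' : k2 < -bc ^ 2) (hk1 : -bc ^ 2 < k1)
    (hk1' : k1 < 0) (hk0 : 0 < k0)
    (h0 : x ^ 2 / (ac ^ 2 + k0) + y ^ 2 / (bc ^ 2 + k0) + z ^ 2 / k0 = 1)
    (h1 : x ^ 2 / (ac ^ 2 + k1) + y ^ 2 / (bc ^ 2 + k1) + z ^ 2 / k1 = 1)
    (h2 : x ^ 2 / (ac ^ 2 + k2) + y ^ 2 / (bc ^ 2 + k2) + z ^ 2 / k2 = 1)
    (ae be ce ah2 bh2 ch2 : ℝ)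
    (hae : ae = Real.sqrt (ac ^ 2 + k0)) (hbe : be = Real.sqrt (bc ^ 2 + k0))
    (hce : ce = Real.sqrt k0)
    (hah2 : ah2 = Real.sqrt (ac ^ 2 + k2))
    (hbh2 : bh2 = Real.sqrt (-(bc ^ 2 + k2)))
    (hch2 : ch2 = Real.sqrt (-k2))
    (n0 n2 v u : EuclideanSpace ℝ (Fin 3))
    (hn0 : n0 = ![x / (ac ^ 2 + k0), y / (bc ^ 2 + k0), z / k0])
    (hn2 : n2 = ![x / (ac ^ 2 + k2), y / (bc ^ 2 + k2), z / k2])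
    (hv : v = (ae * be * ce) • n0 + (ah2 * bh2 * ch2) • n2)
    (hu : u = ‖v‖⁻¹ • v) :
    |⟪u, n0⟫| = (k0 - k1) / (ae * be * ce) :=
  stmt13_general ac bc x y z k0 k1 k2 hk2 hk2' hk1 hk1' hk0 h0 h1 h2 ae be ce ah2 bh2 ch2 hae hbe
    hce hah2 hbh2 hch2 n0 n2 v u hn0 hn2 hv hu
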